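/- Let C be an (n×n) cost matrix and A > 0, and define the (n+1)×(n+1) extended matrix C̄ with C in the top-left block, A in the bottom-right entry, and zeros elsewhere. For 0 < s ≤ 1, the partial optimal transport value POT_s(μ_n, ν_n) = min over π in Π_s(u_n, u_n) of ⟨C, π⟩ equals min over π̄ in Π(ᾱ, ᾱ) of ⟨C̄, π̄⟩, where ᾱ = [u_n, 1−s] is the vector whose first n entries equal 1/n and last entry equals 1−s. Moreover, the restriction of an optimal π̄ to its first n rows and columns is an optimal partial transportation plan. -/

import Mathlib

open scoped BigOperators

/-- The set of partial transportation plans `Π_s(u_n, u_n)`. -/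
def partialPlans (n : ℕ) (s : ℝ) : Set (Matrix (Fin n) (Fin n) ℝ) :=
  {π | (∀ i j, 0 ≤ π i j) ∧ (∀ i, ∑ j, π i j ≤ 1 / n) ∧
       (∀ j, ∑ i, π i j ≤ 1 / n) ∧ ∑ i, ∑ j, π i j = s}

/-- The transportation cost `⟨C, π⟩`. -/
def otCost {n : ℕ} (C π : Matrix (Fin n) (Fin n) ℝ) : ℝ := ∑ i, ∑ j, C i j * π i j

/-!
A partial plan of mass `s` becomes a plan in `Π(ᾱ, ᾱ)` by sending the mass left unmatched in
each row and column to the dummy point `n + 1`; this costs nothing, since `C̄` vanishes off the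
top-left block except at the corner. Conversely, the top-left block of a plan `p ∈ Π(ᾱ, ᾱ)` has
mass `s + p (n+1) (n+1)`, and rescaling it to mass `s` yields a partial plan of cost at most
`⟨C̄, p⟩ - A p (n+1) (n+1)`, because `C ≥ 0`. So the two infima agree, and since `A > 0` an optimal
`p` has an empty corner, whence its top-left block is itself an optimal partial plan.
-/

open Finset

/-- The transport polytope `Π(a, b)`. -/
def transportPlans {ι κ : Type*} [Fintype ι] [Fintype κ] (a : ι → ℝ) (b : κ → ℝ) :
    Set (Matrix ι κ ℝ) :=
  {π | (∀ i j, 0 ≤ π i j) ∧ (∀ i, ∑ j, π i j = a i) ∧ (∀ j, ∑ i, π i j = b j)}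

lemma otCost_nonneg {n : ℕ} {C π : Matrix (Fin n) (Fin n) ℝ} (hC : ∀ i j, 0 ≤ C i j)
    (hπ : ∀ i j, 0 ≤ π i j) : 0 ≤ otCost C π :=
  sum_nonneg fun i _ => sum_nonneg fun j _ => mul_nonneg (hC i j) (hπ i j)

lemma otCost_smul {n : ℕ} (C π : Matrix (Fin n) (Fin n) ℝ) (c : ℝ) :
    otCost C (c • π) = c * otCost C π := by
  simp only [otCost, Matrix.smul_apply, smul_eq_mul, mul_sum, mul_left_comm]

lemma sum_one_div_natCast {n : ℕ} (hn : 0 < n) : ∑ _i : Fin n, (1 / n : ℝ) = 1 := by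
  simp [hn.ne']

lemma smul_mem_partialPlans {n : ℕ} {s : ℝ} {π : Matrix (Fin n) (Fin n) ℝ}
    (hπ0 : ∀ i j, 0 ≤ π i j) (hrow : ∀ i, ∑ j, π i j ≤ 1 / n) (hcol : ∀ j, ∑ i, π i j ≤ 1 / n)
    (hs : 0 < s) (hsπ : s ≤ ∑ i, ∑ j, π i j) :
    (s / ∑ i, ∑ j, π i j) • π ∈ partialPlans n s := by
  set t := ∑ i, ∑ j, π i j
  have ht : 0 < t := hs.trans_le hsπ
  have hc0 : 0 ≤ s / t := div_nonneg hs.le ht.le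
  have hc1 : s / t ≤ 1 := (div_le_one ht).mpr hsπ
  simp only [partialPlans, Set.mem_ofPred_eq, Matrix.smul_apply, smul_eq_mul, ← mul_sum]
  refine ⟨fun i j => mul_nonneg hc0 (hπ0 i j), fun i => ?_, fun j => ?_, div_mul_cancel₀ s ht.ne'⟩
  · exact (mul_le_of_le_one_left (sum_nonneg fun j _ => hπ0 i j) hc1).trans (hrow i)
  · exact (mul_le_of_le_one_left (sum_nonneg fun i _ => hπ0 i j) hc1).trans (hcol j)

noncomputable section

variable {n : ℕ}

/-- `C̄`: the cost `C`, bordered by zeros, with `A` in the corner. -/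
def padCost (C : Matrix (Fin n) (Fin n) ℝ) (A : ℝ) : Matrix (Fin (n + 1)) (Fin (n + 1)) ℝ :=
  Fin.snoc (fun i => Fin.snoc (C i) 0) (Fin.snoc 0 A)

/-- `ᾱ = [u_n, 1 - s]`. -/
def padMarginal (n : ℕ) (s : ℝ) : Fin (n + 1) → ℝ :=
  Fin.snoc (fun _ => 1 / n) (1 - s)

lemma padCost_apply (C : Matrix (Fin n) (Fin n) ℝ) (A : ℝ) (i j : Fin (n + 1)) :
    padCost C A i j =
      if h1 : (i : ℕ) < n then (if h2 : (j : ℕ) < n then C ⟨i, h1⟩ ⟨j, h2⟩ else 0)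
      else (if (j : ℕ) < n then 0 else A) := by
  induction i using Fin.lastCases <;> induction j using Fin.lastCases <;> simp [padCost]

lemma padMarginal_apply (n : ℕ) (s : ℝ) (i : Fin (n + 1)) :
    padMarginal n s i = if (i : ℕ) < n then 1 / (n : ℝ) else 1 - s := by
  induction i using Fin.lastCases <;> simp [padMarginal]

def padPlan (π : Matrix (Fin n) (Fin n) ℝ) : Matrix (Fin (n + 1)) (Fin (n + 1)) ℝ :=
  Fin.snoc (fun i => Fin.snoc (π i) (1 / n - ∑ k, π i k))
    (Fin.snoc (fun j => 1 / n - ∑ k, π k j) 0)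

lemma otCost_padCost (C : Matrix (Fin n) (Fin n) ℝ) (A : ℝ)
    (p : Matrix (Fin (n + 1)) (Fin (n + 1)) ℝ) :
    otCost (padCost C A) p =
      otCost C (p.submatrix Fin.castSucc Fin.castSucc) + A * p (Fin.last n) (Fin.last n) := by
  simp [otCost, padCost, Fin.sum_univ_castSucc]

lemma submatrix_padPlan (π : Matrix (Fin n) (Fin n) ℝ) :
    (padPlan π).submatrix Fin.castSucc Fin.castSucc = π := by
  ext i j
  rw [Matrix.submatrix_apply]
  simp [padPlan]

lemma padPlan_last_last (π : Matrix (Fin n) (Fin n) ℝ) :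
    padPlan π (Fin.last n) (Fin.last n) = 0 := by
  simp [padPlan]

lemma otCost_padCost_padPlan (C π : Matrix (Fin n) (Fin n) ℝ) (A : ℝ) :
    otCost (padCost C A) (padPlan π) = otCost C π := by
  rw [otCost_padCost, submatrix_padPlan, padPlan_last_last, mul_zero, add_zero]

lemma padPlan_mem {s : ℝ} (hn : 0 < n) {π : Matrix (Fin n) (Fin n) ℝ}
    (hπ : π ∈ partialPlans n s) :
    padPlan π ∈ transportPlans (padMarginal n s) (padMarginal n s) := by
  obtain ⟨hπ0, hrow, hcol, hmass⟩ := hπ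
  have hmass' : ∑ j, ∑ i, π i j = s := by rw [sum_comm]; exact hmass
  refine ⟨fun i j => ?_, fun i => ?_, fun j => ?_⟩
  · induction i using Fin.lastCases <;> induction j using Fin.lastCases <;>
      simp only [padPlan, Fin.snoc_castSucc, Fin.snoc_last, sub_nonneg, le_refl, hπ0, hrow, hcol]
  · induction i using Fin.lastCases
    · simp [padPlan, padMarginal, Fin.sum_univ_castSucc, sum_sub_distrib, hmass', hn.ne']
    · simp [padPlan, padMarginal, Fin.sum_univ_castSucc]
  · induction j using Fin.lastCases
    · simp [padPlan, padMarginal, Fin.sum_univ_castSucc, sum_sub_distrib, hmass, hn.ne']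
    · simp [padPlan, padMarginal, Fin.sum_univ_castSucc]

section Restriction

variable {s : ℝ} {p : Matrix (Fin (n + 1)) (Fin (n + 1)) ℝ}

lemma sum_submatrix_row (hp : p ∈ transportPlans (padMarginal n s) (padMarginal n s))
    (i : Fin n) :
    ∑ j, p.submatrix Fin.castSucc Fin.castSucc i j = 1 / n - p i.castSucc (Fin.last n) := by
  have := hp.2.1 i.castSucc
  rw [Fin.sum_univ_castSucc, padMarginal, Fin.snoc_castSucc] at this
  simp only [Matrix.submatrix_apply]
  linarith

lemma sum_submatrix_col (hp : p ∈ transportPlans (padMarginal n s) (padMarginal n s))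
    (j : Fin n) :
    ∑ i, p.submatrix Fin.castSucc Fin.castSucc i j = 1 / n - p (Fin.last n) j.castSucc := by
  have := hp.2.2 j.castSucc
  rw [Fin.sum_univ_castSucc, padMarginal, Fin.snoc_castSucc] at this
  simp only [Matrix.submatrix_apply]
  linarith

lemma sum_sum_submatrix (hn : 0 < n)
    (hp : p ∈ transportPlans (padMarginal n s) (padMarginal n s)) :
    ∑ i, ∑ j, p.submatrix Fin.castSucc Fin.castSucc i j = s + p (Fin.last n) (Fin.last n) := by
  have hlast := hp.2.2 (Fin.last n)
  rw [Fin.sum_univ_castSucc, padMarginal, Fin.snoc_last] at hlast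
  rw [sum_congr rfl fun i _ => sum_submatrix_row hp i, sum_sub_distrib, sum_one_div_natCast hn]
  linarith

lemma sum_submatrix_row_le (hp : p ∈ transportPlans (padMarginal n s) (padMarginal n s))
    (i : Fin n) : ∑ j, p.submatrix Fin.castSucc Fin.castSucc i j ≤ 1 / n :=
  (sum_submatrix_row hp i).trans_le (sub_le_self _ (hp.1 _ _))

lemma sum_submatrix_col_le (hp : p ∈ transportPlans (padMarginal n s) (padMarginal n s))
    (j : Fin n) : ∑ i, p.submatrix Fin.castSucc Fin.castSucc i j ≤ 1 / n :=
  (sum_submatrix_col hp j).trans_le (sub_le_self _ (hp.1 _ _))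

end Restriction

lemma submatrix_mem_partialPlans {s : ℝ} (hn : 0 < n)
    {p : Matrix (Fin (n + 1)) (Fin (n + 1)) ℝ}
    (hp : p ∈ transportPlans (padMarginal n s) (padMarginal n s))
    (hcorner : p (Fin.last n) (Fin.last n) = 0) :
    p.submatrix Fin.castSucc Fin.castSucc ∈ partialPlans n s :=
  ⟨fun _ _ => hp.1 _ _, sum_submatrix_row_le hp, sum_submatrix_col_le hp, by
    rw [sum_sum_submatrix hn hp, hcorner, add_zero]⟩

/-- Rescaling the restriction of a padded plan to total mass `s` saves at least the
corner cost `A * p (last n) (last n)`. -/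
lemma exists_mem_partialPlans_otCost_add_le {s : ℝ} (hn : 0 < n) (hs : 0 < s)
    {C : Matrix (Fin n) (Fin n) ℝ} (hC : ∀ i j, 0 ≤ C i j) (A : ℝ)
    {p : Matrix (Fin (n + 1)) (Fin (n + 1)) ℝ}
    (hp : p ∈ transportPlans (padMarginal n s) (padMarginal n s)) :
    ∃ π ∈ partialPlans n s,
      otCost C π + A * p (Fin.last n) (Fin.last n) ≤ otCost (padCost C A) p := by
  set q := p.submatrix Fin.castSucc Fin.castSucc
  have hq0 : ∀ i j, 0 ≤ q i j := fun i j => hp.1 _ _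
  have hcorner := hp.1 (Fin.last n) (Fin.last n)
  have hsq : s ≤ ∑ i, ∑ j, q i j := by
    rw [sum_sum_submatrix hn hp]
    linarith
  refine ⟨_, smul_mem_partialPlans hq0 (sum_submatrix_row_le hp) (sum_submatrix_col_le hp) hs hsq,
    ?_⟩
  rw [otCost_smul, otCost_padCost]
  gcongr
  exact mul_le_of_le_one_left (otCost_nonneg hC hq0) (div_le_one_of_le₀ hsq (hs.le.trans hsq))

end

theorem stmt_0_general (n : ℕ) (hn : 0 < n) (s : ℝ) (hs : 0 < s)
    (C : Matrix (Fin n) (Fin n) ℝ) (hC : ∀ i j, 0 ≤ C i j) (A : ℝ) (hA : 0 < A)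
    (Cbar : Matrix (Fin (n + 1)) (Fin (n + 1)) ℝ)
    (hCbar : ∀ i j : Fin (n + 1), Cbar i j =
      if h1 : (i : ℕ) < n then (if h2 : (j : ℕ) < n then C ⟨i, h1⟩ ⟨j, h2⟩ else 0)
      else (if (j : ℕ) < n then 0 else A))
    (αbar : Fin (n + 1) → ℝ)
    (hαbar : ∀ i : Fin (n + 1), αbar i = if (i : ℕ) < n then 1 / (n : ℝ) else 1 - s)
    (ExtPlans : Set (Matrix (Fin (n + 1)) (Fin (n + 1)) ℝ))
    (hExt : ExtPlans = {π | (∀ i j, 0 ≤ π i j) ∧ (∀ i, ∑ j, π i j = αbar i) ∧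
      (∀ j, ∑ i, π i j = αbar j)}) :
    (sInf (otCost C '' partialPlans n s) = sInf (otCost Cbar '' ExtPlans)) ∧
    (∀ πbar ∈ ExtPlans, (∀ π' ∈ ExtPlans, otCost Cbar πbar ≤ otCost Cbar π') →
      ((fun i j : Fin n => πbar i.castSucc j.castSucc) ∈ partialPlans n s ∧
        ∀ π' ∈ partialPlans n s,
          otCost C (fun i j : Fin n => πbar i.castSucc j.castSucc) ≤ otCost C π')) := by
  obtain rfl : Cbar = padCost C A :=
    funext₂ fun i j => (hCbar i j).trans (padCost_apply C A i j).symm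
  obtain rfl : αbar = padMarginal n s :=
    funext fun i => (hαbar i).trans (padMarginal_apply n s i).symm
  obtain rfl : ExtPlans = transportPlans (padMarginal n s) (padMarginal n s) := hExt
  have hcheaper := fun p (hp : p ∈ transportPlans (padMarginal n s) (padMarginal n s)) =>
    exists_mem_partialPlans_otCost_add_le hn hs hC A hp
  refine ⟨csInf_eq_csInf_of_forall_exists_le ?_ ?_, fun p hp hopt => ?_⟩
  · rintro _ ⟨π, hπ, rfl⟩
    exact ⟨_, ⟨padPlan π, padPlan_mem hn hπ, rfl⟩, (otCost_padCost_padPlan C π A).le⟩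
  · rintro _ ⟨p, hp, rfl⟩
    obtain ⟨π, hπ, hle⟩ := hcheaper p hp
    exact ⟨_, ⟨π, hπ, rfl⟩, by linarith [mul_nonneg hA.le (hp.1 (Fin.last n) (Fin.last n))]⟩
  · have hcorner : p (Fin.last n) (Fin.last n) = 0 := by
      obtain ⟨π, hπ, hle⟩ := hcheaper p hp
      have hpπ := hopt _ (padPlan_mem hn hπ)
      rw [otCost_padCost_padPlan] at hpπ
      have hAc : A * p (Fin.last n) (Fin.last n) = 0 :=
        le_antisymm (by linarith) (mul_nonneg hA.le (hp.1 _ _))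
      exact (mul_eq_zero.mp hAc).resolve_left hA.ne'
    refine ⟨submatrix_mem_partialPlans hn hp hcorner, fun π hπ => ?_⟩
    have hpπ := hopt _ (padPlan_mem hn hπ)
    rwa [otCost_padCost_padPlan, otCost_padCost, hcorner, mul_zero, add_zero] at hpπ

theorem stmt_0 (n : ℕ) (hn : 0 < n) (s : ℝ) (hs : 0 < s) (hs1 : s ≤ 1)
    (C : Matrix (Fin n) (Fin n) ℝ) (hC : ∀ i j, 0 ≤ C i j) (A : ℝ) (hA : 0 < A)
    (Cbar : Matrix (Fin (n + 1)) (Fin (n + 1)) ℝ)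
    (hCbar : ∀ i j : Fin (n + 1), Cbar i j =
      if h1 : (i : ℕ) < n then (if h2 : (j : ℕ) < n then C ⟨i, h1⟩ ⟨j, h2⟩ else 0)
      else (if (j : ℕ) < n then 0 else A))
    (αbar : Fin (n + 1) → ℝ)
    (hαbar : ∀ i : Fin (n + 1), αbar i = if (i : ℕ) < n then 1 / (n : ℝ) else 1 - s)
    (ExtPlans : Set (Matrix (Fin (n + 1)) (Fin (n + 1)) ℝ))
    (hExt : ExtPlans = {π | (∀ i j, 0 ≤ π i j) ∧ (∀ i, ∑ j, π i j = αbar i) ∧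
      (∀ j, ∑ i, π i j = αbar j)}) :
    (sInf (otCost C '' partialPlans n s) = sInf (otCost Cbar '' ExtPlans)) ∧
    (∀ πbar ∈ ExtPlans, (∀ π' ∈ ExtPlans, otCost Cbar πbar ≤ otCost Cbar π') →
      ((fun i j : Fin n => πbar i.castSucc j.castSucc) ∈ partialPlans n s ∧
        ∀ π' ∈ partialPlans n s,
          otCost C (fun i j : Fin n => πbar i.castSucc j.castSucc) ≤ otCost C π')) :=
  stmt_0_general n hn s hs C hC A hA Cbar hCbar αbar hαbar ExtPlans hExt
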